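/- Conversely, for Φ(n) = (1+α)_{n−1}/(n−1)! with 0 ≤ α ≤ 1, the identity n(Φ(n)−Φ(n−1))/Φ(n) = n[1 − ∑_{k=2}^n C(n−1,k−1)(−1)^k/Φ(k)] holds for all n ≥ 2 (i.e. the (α,α) composition structure has P(first part = 1) = P(last part = 1)). -/

import Mathlib

/-!
With `g k = k! / (1+α)_k = 1 / Φ(k+1)`, the right-hand side is governed by the alternating binomial
sum `∑ j, C(n-1,j) (-1)^j g j = (-1)^{n-1} Δ^{n-1} g 0`, `Δ` the forward difference. Since `Δ` maps
`r ↦ r! / (w)_{r+1}` to `r ↦ -r! / (w+1)_{r+1}`, the iterated differences have the closed form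
`Δ^m g r = (-1)^m α r! / (m+α)_{r+1}` for `m ≥ 1`, so the sum equals `α / (n-1+α)`, which is also
`1 - Φ(n-1)/Φ(n)`.
-/

/-- Rising factorial `(z)_k = z (z+1) ⋯ (z+k-1)`. -/
noncomputable def rpoch (z : ℝ) (k : ℕ) : ℝ := ∏ i ∈ Finset.range k, (z + i)

/-- Laplace exponent of the `(α,α)` composition structure:
`Φ(n) = (1+α)_{n−1}/(n−1)!` for `n ≥ 1`, with `Φ(0) = 0`. -/
noncomputable def PhiAA (α : ℝ) (n : ℕ) : ℝ :=
  if n = 0 then 0 else rpoch (1 + α) (n - 1) / ((n - 1).factorial : ℝ)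

open Finset fwdDiff Nat

lemma rpoch_succ (z : ℝ) (k : ℕ) : rpoch z (k + 1) = rpoch z k * (z + k) :=
  prod_range_succ _ _

lemma rpoch_succ' (z : ℝ) (k : ℕ) : rpoch z (k + 1) = z * rpoch (z + 1) k := by
  simp only [rpoch, prod_range_succ', Nat.cast_succ, Nat.cast_zero, add_zero, add_assoc,
    add_comm (1 : ℝ), mul_comm z]

lemma rpoch_pos {z : ℝ} (hz : 0 < z) (k : ℕ) : 0 < rpoch z k :=
  prod_pos fun i _ => by positivity

@[simp] lemma rpoch_zero (z : ℝ) : rpoch z 0 = 1 := prod_range_zero _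

@[simp] lemma rpoch_one (z : ℝ) : rpoch z 1 = z := by simp [rpoch]

lemma PhiAA_succ (α : ℝ) (k : ℕ) : PhiAA α (k + 1) = rpoch (1 + α) k / k ! := by
  simp [PhiAA]

lemma fwdDiff_factorial_div_rpoch {z : ℝ} (hz : 0 < z) :
    Δ_[1] (fun r : ℕ => (r ! : ℝ) / rpoch z r) = fun r => (1 - z) * r ! / rpoch z (r + 1) := by
  funext r
  have := rpoch_pos hz r
  have : 0 < z + r := by positivity
  simp only [fwdDiff, rpoch_succ, factorial_succ, Nat.cast_mul, Nat.cast_succ]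
  field_simp
  ring

lemma fwdDiff_factorial_div_rpoch_succ {w : ℝ} (hw : 0 < w) :
    Δ_[1] (fun r : ℕ => (r ! : ℝ) / rpoch w (r + 1)) =
      fun r => -((r ! : ℝ) / rpoch (w + 1) (r + 1)) := by
  funext r
  have := rpoch_pos (z := w + 1) (by positivity) r
  have : 0 < w + 1 + r := by positivity
  simp only [fwdDiff, rpoch_succ' w, rpoch_succ (w + 1), factorial_succ, Nat.cast_mul,
    Nat.cast_succ]
  field_simp
  ring

lemma fwdDiff_iter_factorial_div_rpoch {z : ℝ} (hz : 0 < z) (m : ℕ) :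
    (Δ_[1])^[m + 1] (fun r : ℕ => (r ! : ℝ) / rpoch z r) =
      fun r => (-1) ^ m * (1 - z) * (r ! / rpoch (z + m) (r + 1)) := by
  induction m with
  | zero => simp [fwdDiff_factorial_div_rpoch hz, mul_div_assoc]
  | succ m ih =>
    rw [Function.iterate_succ_apply', ih]
    funext r
    have := congrFun (fwdDiff_factorial_div_rpoch_succ (w := z + m) (by positivity)) r
    simp only [fwdDiff] at this ⊢
    push_cast
    rw [← add_assoc]
    linear_combination (-1) ^ m * (1 - z) * this

lemma neg_one_pow_mul_neg_one_pow_sub {R : Type*} [Monoid R] [HasDistribNeg R] {n k : ℕ}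
    (h : k ≤ n) : (-1 : R) ^ n * (-1) ^ (n - k) = (-1) ^ k := by
  obtain ⟨j, rfl⟩ := Nat.exists_eq_add_of_le h
  rw [Nat.add_sub_cancel_left, pow_add, mul_assoc, ← pow_add, ← two_mul, pow_mul, neg_one_sq,
    one_pow, mul_one]

lemma sum_choose_mul_neg_one_pow_mul_factorial_div_rpoch {z : ℝ} (hz : 0 < z) (m : ℕ) :
    ∑ k ∈ range (m + 2), ((m + 1).choose k : ℝ) * (-1) ^ k * (k ! / rpoch z k) =
      (z - 1) / (z + m) := by
  have h := congrFun (fwdDiff_iter_factorial_div_rpoch hz m) 0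
  simp only [fwdDiff_iter_eq_sum_shift, zero_add, smul_eq_mul, mul_one, factorial_zero,
    Nat.cast_one, rpoch_one, zsmul_eq_mul, Int.cast_mul, Int.cast_pow, Int.cast_neg,
    Int.cast_one, Int.cast_natCast] at h
  calc ∑ k ∈ range (m + 2), ((m + 1).choose k : ℝ) * (-1) ^ k * (k ! / rpoch z k)
      = (-1) ^ (m + 1) * ∑ k ∈ range (m + 2),
          (-1) ^ (m + 1 - k) * ((m + 1).choose k : ℝ) * (k ! / rpoch z k) := by
        rw [mul_sum]
        refine sum_congr rfl fun k hk => ?_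
        rw [← neg_one_pow_mul_neg_one_pow_sub (mem_range_succ_iff.mp hk)]
        ring
    _ = (z - 1) / (z + m) := by
        rw [h, ← mul_assoc, ← mul_assoc, ← pow_add, Odd.neg_one_pow ⟨m, by ring⟩]
        ring

lemma PhiAA_succ_succ_sub_div {α : ℝ} (hα : -1 < α) (k : ℕ) :
    (PhiAA α (k + 2) - PhiAA α (k + 1)) / PhiAA α (k + 2) = α / (1 + α + k) := by
  have := rpoch_pos (z := 1 + α) (by linarith) k
  have : 0 < 1 + α + k := by linarith [k.cast_nonneg (α := ℝ)]
  simp only [PhiAA_succ, rpoch_succ, factorial_succ, Nat.cast_mul, Nat.cast_succ]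
  field_simp
  ring

lemma sum_Icc_choose_mul_neg_one_pow_div_PhiAA {α : ℝ} (hα : -1 < α) (m : ℕ) :
    ∑ k ∈ Icc 2 (m + 2), ((m + 1).choose (k - 1) : ℝ) * (-1) ^ k / PhiAA α k =
      1 - α / (1 + α + m) := by
  have h := sum_choose_mul_neg_one_pow_mul_factorial_div_rpoch (z := 1 + α) (by linarith) m
  rw [sum_range_succ'] at h
  calc ∑ k ∈ Icc 2 (m + 2), ((m + 1).choose (k - 1) : ℝ) * (-1) ^ k / PhiAA α k
      = -∑ j ∈ range (m + 1), ((m + 1).choose (j + 1) : ℝ) * (-1) ^ (j + 1) *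
          ((j + 1)! / rpoch (1 + α) (j + 1)) := by
        rw [← Ico_add_one_right_eq_Icc, sum_Ico_eq_sum_range, ← sum_neg_distrib]
        refine sum_congr rfl fun j _ => ?_
        rw [show 2 + j = j + 1 + 1 by ring, Nat.add_sub_cancel, PhiAA_succ, div_div_eq_mul_div]
        ring
    _ = 1 - α / (1 + α + m) := by
        simp only [choose_zero_right, Nat.cast_one, pow_zero, one_mul, factorial_zero,
          rpoch_zero] at h
        linear_combination -h

theorem alphaAlpha_reversible_general (α : ℝ) (h0 : 0 ≤ α) :
    ∀ n : ℕ, 2 ≤ n →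
      (n : ℝ) * (PhiAA α n - PhiAA α (n - 1)) / PhiAA α n =
        (n : ℝ) * (1 - ∑ k ∈ Finset.Icc 2 n,
          ((n - 1).choose (k - 1) : ℝ) * (-1 : ℝ) ^ k / PhiAA α k) := by
  intro n hn
  obtain ⟨m, rfl⟩ : ∃ m, n = m + 2 := ⟨n - 2, by omega⟩
  have hα : -1 < α := by linarith
  rw [mul_div_assoc, show m + 2 - 1 = m + 1 from rfl, PhiAA_succ_succ_sub_div hα,
    sum_Icc_choose_mul_neg_one_pow_div_PhiAA hα]
  ring

/-- For `Φ(n) = (1+α)_{n−1}/(n−1)!` with `0 ≤ α ≤ 1`, the identity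
`n(Φ(n)−Φ(n−1))/Φ(n) = n[1 − ∑_{k=2}^n C(n−1,k−1)(−1)^k/Φ(k)]` holds for all
`n ≥ 2` (the `(α,α)` structure has `P(first part = 1) = P(last part = 1)`). -/
theorem alphaAlpha_reversible (α : ℝ) (h0 : 0 ≤ α) (h1 : α ≤ 1) :
    ∀ n : ℕ, 2 ≤ n →
      (n : ℝ) * (PhiAA α n - PhiAA α (n - 1)) / PhiAA α n =
        (n : ℝ) * (1 - ∑ k ∈ Finset.Icc 2 n,
          ((n - 1).choose (k - 1) : ℝ) * (-1 : ℝ) ^ k / PhiAA α k) :=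
  alphaAlpha_reversible_general α h0
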